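/- Let v ∈ C¹((0,R)) satisfy v(0)=v'(0)=0 and 0 ≤ v' ≤ 1/2, and set V_r = −v(r)e_n. Then there exists a function φ ∈ C¹(B_R(V_R) ∖ {0}) with 0 ≤ φ < R such that ∂B_r(V_r) = φ⁻¹(r) for all 0 < r < R; moreover for every x ∈ B_R(V_R) ∖ {0}: (i) ∇φ(x)/|∇φ(x)| = (x − V_{φ(x)})/|x − V_{φ(x)}|; (ii) |∇φ(x) − x/|x|| ≤ 4 √( v(φ(x))/φ(x) + v'(φ(x)) ). -/

import Mathlib

open MeasureTheory Metric Set Filter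
open scoped Topology ENNReal NNReal RealInnerProductSpace

noncomputable section

abbrev Eucl (n : ℕ) : Type := EuclideanSpace ℝ (Fin n)

/-- Divergence of a vector field on `Eucl n`. -/
def diverg {n : ℕ} (Φ : Eucl n → Eucl n) (x : Eucl n) : ℝ :=
  ∑ i, fderiv ℝ Φ x (EuclideanSpace.single i 1) i

/-- Total variation `|Df|(U)` of `f` on the set `U`, defined by duality with
compactly supported `C¹` vector fields bounded by one. -/
def totalVariation {n : ℕ} (f : Eucl n → ℝ) (U : Set (Eucl n)) : ℝ≥0∞ :=
  ⨆ Φ : {Φ : Eucl n → Eucl n // ContDiff ℝ 1 Φ ∧ HasCompactSupport Φ ∧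
      tsupport Φ ⊆ U ∧ ∀ x, ‖Φ x‖ ≤ 1},
    ENNReal.ofReal (∫ x in U, f x * diverg Φ.1 x)

/-- `f ∈ BV(U)`: `f` is integrable on `U` with finite total variation in `U`. -/
def MemBV {n : ℕ} (f : Eucl n → ℝ) (U : Set (Eucl n)) : Prop :=
  IntegrableOn f U volume ∧ totalVariation f U < ⊤

/-- `f ∈ BV_loc(Ω)`: `f ∈ BV(Ω ∩ A)` for every bounded open set `A ⊆ ℝⁿ`. -/
def MemBVloc {n : ℕ} (f : Eucl n → ℝ) (Ω : Set (Eucl n)) : Prop :=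
  ∀ A : Set (Eucl n), IsOpen A → Bornology.IsBounded A → MemBV f (Ω ∩ A)

/-- Perimeter `P(E;U) = |D1_E|(U)` of a set `E` in `U`. -/
def perim {n : ℕ} (E U : Set (Eucl n)) : ℝ≥0∞ :=
  totalVariation (Set.indicator E fun _ => (1 : ℝ)) U

/-- `K ⊂⊂ A` : `K` is compactly contained in `A`. -/
def CptIn {n : ℕ} (K A : Set (Eucl n)) : Prop :=
  IsCompact (closure K) ∧ closure K ⊆ A

/-- The minimality gap `Ψ_Ω(f;A)` of a function `f` in `A`, relative to `Ω`. -/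
def minGap {n : ℕ} (Ω A : Set (Eucl n)) (f : Eucl n → ℝ) : ℝ≥0∞ :=
  totalVariation f (Ω ∩ A) -
    ⨅ g : {g : Eucl n → ℝ // MemBVloc g Ω ∧ CptIn (tsupport (g - f)) A},
      totalVariation g.1 (Ω ∩ A)

/-- The minimality gap `Ψ_Ω(E;A)` of a set `E` in `A`, relative to `Ω`. -/
def minGapSet {n : ℕ} (Ω A E : Set (Eucl n)) : ℝ≥0∞ :=
  minGap Ω A (Set.indicator E fun _ => (1 : ℝ))

/-- The point `(x', t) ∈ ℝ^{n+1}` obtained by appending the coordinate `t` to `x' ∈ ℝⁿ`. -/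
def snocE {n : ℕ} (x' : Eucl n) (t : ℝ) : Eucl (n+1) :=
  (EuclideanSpace.equiv (Fin (n+1)) ℝ).symm (Fin.snoc (EuclideanSpace.equiv (Fin n) ℝ x') t)

/-- The first `n` coordinates `x'` of a point `x ∈ ℝ^{n+1}`. -/
def initE {n : ℕ} (x : Eucl (n+1)) : Eucl n :=
  (EuclideanSpace.equiv (Fin n) ℝ).symm (Fin.init (EuclideanSpace.equiv (Fin (n+1)) ℝ x))

/-- The last coordinate of a point `x ∈ ℝ^{n+1}`. -/
def lastE {n : ℕ} (x : Eucl (n+1)) : ℝ := x (Fin.last n)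

/-- Conditions (V1)–(V2) for a visibility function: `u ∈ C¹([0,T))` (with derivative
`u'`), `u(0) = u'(0) = 0`, `0 ≤ u' ≤ 1/2`, and
`γ_u(t) = t⁻¹ sup_{0<s≤t} √(u(s)/s + u'(s))` is summable on `(0,T)`. -/
def VisibilityV12 (u u' : ℝ → ℝ) (T : ℝ) : Prop :=
  0 < T ∧ u 0 = 0 ∧ u' 0 = 0 ∧
  ContinuousOn u (Ico 0 T) ∧ ContinuousOn u' (Ico 0 T) ∧
  (∀ t ∈ Ioo (0:ℝ) T, HasDerivAt u (u' t) t) ∧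
  (∀ t ∈ Ico (0:ℝ) T, 0 ≤ u' t ∧ u' t ≤ 1/2) ∧
  MeasureTheory.IntegrableOn
    (fun t => t⁻¹ * sSup ((fun s => Real.sqrt (u s / s + u' s)) '' Ioc (0:ℝ) t))
    (Ioo (0:ℝ) T) volume

/-- The point `U_t = −u(t)·e_{n+1}` (resp. `V_r = −v(r)·e_{n+1}`). -/
def vertexPt {n : ℕ} (u : ℝ → ℝ) (t : ℝ) : Eucl (n+1) := snocE (0 : Eucl n) (-(u t))

/-- Condition (V3): for all `0 < t < T`, the segment joining `U_t = −u(t)eₙ` with any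
point of `∂Ω ∩ B_t` does not intersect `Ω`. -/
def VisibilityV3 {n : ℕ} (Ω : Set (Eucl (n+1))) (u : ℝ → ℝ) (T : ℝ) : Prop :=
  ∀ t ∈ Ioo (0:ℝ) T, ∀ x ∈ frontier Ω ∩ ball (0 : Eucl (n+1)) t,
    Disjoint (segment ℝ (vertexPt u t) x) Ω

/-- Off-centric condition (V3'): for all `0 < r < R`, any segment joining
`V_r = −v(r)eₙ` with a point of `∂Ω ∩ B_r(V_r)` does not intersect `Ω`. -/
def VisibilityV3' {n : ℕ} (Ω : Set (Eucl (n+1))) (v : ℝ → ℝ) (R : ℝ) : Prop :=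
  ∀ r ∈ Ioo (0:ℝ) R, ∀ x ∈ frontier Ω ∩ ball (vertexPt v r : Eucl (n+1)) r,
    Disjoint (segment ℝ (vertexPt v r) x) Ω

/-- The visibility property at `0` (centered form). -/
def Visibility {n : ℕ} (Ω : Set (Eucl (n+1))) (u u' : ℝ → ℝ) (T : ℝ) : Prop :=
  VisibilityV12 u u' T ∧ VisibilityV3 Ω u T

/-- The visibility property at `0` (off-centric form). -/
def Visibility' {n : ℕ} (Ω : Set (Eucl (n+1))) (v v' : ℝ → ℝ) (R : ℝ) : Prop :=
  VisibilityV12 v v' R ∧ VisibilityV3' Ω v R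

/-- Local graphical representation of `∂Ω` near `0 ∈ ∂Ω` in the cylinder
`B'_ρ × (−3m, 3m)` as the epigraph of `ω`. -/
def GraphRep {n : ℕ} (Ω : Set (Eucl (n+1))) (ω : Eucl n → ℝ) (ρ m : ℝ) : Prop :=
  Ω ∩ {x : Eucl (n+1) | ‖initE x‖ < ρ ∧ |lastE x| < 3*m} =
    {x : Eucl (n+1) | ‖initE x‖ < ρ ∧ ω (initE x) < lastE x ∧ lastE x < 3*m}

/-!
For `x ≠ 0` in `B_R(V_R)` the gap `r ↦ ‖x + v(r) e‖ - r = |x - V_r| - r` is positive at `0` and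
negative at `R`, and it decreases at rate at least `1/2` because `v` is `1/2`-Lipschitz; so it has
a unique zero `φ(x)`, and `φ` is `2`-Lipschitz. The implicit function theorem for
`‖x + v(r) e‖² = r²`, whose `r`-derivative `2 (v'(r) ⟪w, e⟫ - r)` is at most `-r`, makes `φ` a
`C¹` function with `∇φ(x) = w / (r - v'(r) ⟪w, e⟫)`, where `r = φ(x)` and `w = x - V_r`. The
denominator differs from `r` by at most `v'(r) r` and `|w - x| = v(r)`, which gives
`|∇φ(x) - x/|x|| ≤ 2 v'(r) + 2 v(r)/r`.
-/

lemma vertexPt_eq_neg_smul_single {n : ℕ} (u : ℝ → ℝ) (t : ℝ) :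
    (vertexPt u t : Eucl (n + 1)) = -(u t • EuclideanSpace.single (Fin.last n) 1) := by
  ext i
  induction i using Fin.lastCases with
  | last => simp [vertexPt, snocE]
  | cast i => simp [vertexPt, snocE, (Fin.castSucc_lt_last i).ne]

lemma monotoneOn_Icc_of_hasDerivAt_nonneg {f f' : ℝ → ℝ} {a b : ℝ}
    (hf : ContinuousOn f (Icc a b)) (hf' : ∀ t ∈ Ioo a b, HasDerivAt f (f' t) t)
    (hf'₀ : ∀ t ∈ Ioo a b, 0 ≤ f' t) : MonotoneOn f (Icc a b) :=
  monotoneOn_of_hasDerivWithinAt_nonneg (convex_Icc a b) hf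
    (by simpa using fun t ht => (hf' t ht).hasDerivWithinAt) (by simpa using hf'₀)

lemma lipschitzOnWith_of_monotoneOn {f : ℝ → ℝ} {s : Set ℝ} {C : ℝ≥0}
    (hf : MonotoneOn f s) (hCf : MonotoneOn (fun t => C * t - f t) s) :
    LipschitzOnWith C f s := by
  refine LipschitzOnWith.of_dist_le_mul fun x hx y hy => ?_
  rw [Real.dist_eq, Real.dist_eq]
  wlog hxy : y ≤ x generalizing x y
  · rw [abs_sub_comm, abs_sub_comm x]
    exact this y hy x hx (le_of_not_ge hxy)
  have h₁ := hf hy hx hxy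
  have h₂ := hCf hy hx hxy
  simp only at h₂
  rw [abs_of_nonneg (sub_nonneg.2 h₁), abs_of_nonneg (sub_nonneg.2 hxy)]
  linarith

lemma lipschitzOnWith_Icc_of_hasDerivAt {f f' : ℝ → ℝ} {a b : ℝ} {C : ℝ≥0}
    (hf : ContinuousOn f (Icc a b)) (hf' : ∀ t ∈ Ioo a b, HasDerivAt f (f' t) t)
    (hf'₀ : ∀ t ∈ Ioo a b, 0 ≤ f' t) (hf'C : ∀ t ∈ Ioo a b, f' t ≤ C) :
    LipschitzOnWith C f (Icc a b) :=
  lipschitzOnWith_of_monotoneOn (monotoneOn_Icc_of_hasDerivAt_nonneg hf hf' hf'₀)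
    (monotoneOn_Icc_of_hasDerivAt_nonneg (by fun_prop)
      (fun t ht => ((hasDerivAt_id t).const_mul _).sub (hf' t ht))
      fun t ht => by simpa using hf'C t ht)

lemma HasDerivAt.abs_le_of_lipschitzOnWith {f : ℝ → ℝ} {a x : ℝ} {s : Set ℝ} {C : ℝ≥0}
    (hf : HasDerivAt f a x) (hs : s ∈ 𝓝 x) (hC : LipschitzOnWith C f s) : |a| ≤ C := by
  simpa [hf.deriv] using norm_deriv_le_of_lipschitzOn hs hC

lemma contDiffOn_one_of_hasDerivAt {f f' : ℝ → ℝ} {s : Set ℝ} (hs : IsOpen s)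
    (hf : ∀ t ∈ s, HasDerivAt f (f' t) t) (hf' : ContinuousOn f' s) : ContDiffOn ℝ 1 f s := by
  rw [show (1 : WithTop ℕ∞) = 0 + 1 from rfl, contDiffOn_succ_iff_deriv_of_isOpen hs]
  refine ⟨fun t ht => (hf t ht).differentiableAt.differentiableWithinAt, by simp, ?_⟩
  exact contDiffOn_zero.2 (hf'.congr fun t ht => (hf t ht).deriv)

lemma ContinuousLinearMap.isInvertible_of_apply_one_ne_zero {𝕜 : Type*}
    [NontriviallyNormedField 𝕜] {f : 𝕜 →L[𝕜] 𝕜} (hf : f 1 ≠ 0) : f.IsInvertible := by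
  refine .of_inverse (g := (f 1)⁻¹ • ContinuousLinearMap.id 𝕜 𝕜) ?_ ?_ <;> ext
  · rw [comp_apply, smul_apply, id_apply, map_smul, smul_eq_mul, inv_mul_cancel₀ hf]
  · simp only [comp_apply, smul_apply, id_apply, smul_eq_mul, inv_mul_cancel₀ hf]

lemma ContDiffAt.contDiffAt_of_eventually_apply_eq {𝕜 : Type*} [RCLike 𝕜]
    {E₁ : Type*} [NormedAddCommGroup E₁] [NormedSpace 𝕜 E₁] [CompleteSpace E₁]
    {E₂ : Type*} [NormedAddCommGroup E₂] [NormedSpace 𝕜 E₂] [CompleteSpace E₂]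
    {F : Type*} [NormedAddCommGroup F] [NormedSpace 𝕜 F] [CompleteSpace F]
    {f : E₁ × E₂ → F} {ψ : E₁ → E₂} {x : E₁} {n : WithTop ℕ∞}
    (hf : ContDiffAt 𝕜 n f (x, ψ x)) (hn : n ≠ 0)
    (hf₂ : (fderiv 𝕜 f (x, ψ x) ∘L .inr 𝕜 E₁ E₂).IsInvertible) (hψ : ContinuousAt ψ x)
    (hfψ : ∀ᶠ y in 𝓝 x, f (y, ψ y) = f (x, ψ x)) : ContDiffAt 𝕜 n ψ x := by
  have hgraph : Tendsto (fun y => (y, ψ y)) (𝓝 x) (𝓝 (x, ψ x)) :=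
    continuousAt_id.prodMk hψ
  refine (hf.contDiffAt_implicitFunction hn hf₂).congr_of_eventuallyEq ?_
  filter_upwards [hgraph.eventually (hf.eventually_apply_eq_iff_implicitFunction hn hf₂), hfψ]
    with y hiff hy
  exact (hiff.1 hy).symm

section

variable {E : Type*} [NormedAddCommGroup E] [NormedSpace ℝ E]

lemma norm_normalize_sub_normalize_le {x y : E} (hy : y ≠ 0) :
    ‖NormedSpace.normalize x - NormedSpace.normalize y‖ ≤ 2 * ‖x - y‖ / ‖y‖ := by
  have hy : 0 < ‖y‖ := norm_pos_iff.2 hy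
  have hsplit : NormedSpace.normalize x - NormedSpace.normalize y
      = (‖x‖⁻¹ - ‖y‖⁻¹) • x + ‖y‖⁻¹ • (x - y) := by
    rw [NormedSpace.normalize, NormedSpace.normalize]; module
  have hfirst : ‖(‖x‖⁻¹ - ‖y‖⁻¹) • x‖ ≤ ‖x - y‖ / ‖y‖ := by
    rcases eq_or_ne x 0 with rfl | hx
    · simp only [smul_zero, norm_zero]; positivity
    have hx : 0 < ‖x‖ := norm_pos_iff.2 hx
    rw [norm_smul, Real.norm_eq_abs, inv_sub_inv hx.ne' hy.ne', abs_div,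
      abs_of_pos (mul_pos hx hy), abs_sub_comm, div_mul_eq_mul_div, mul_comm ‖x‖,
      mul_div_mul_right _ _ hx.ne']
    gcongr
    exact abs_norm_sub_norm_le x y
  have hsecond : ‖‖y‖⁻¹ • (x - y)‖ = ‖x - y‖ / ‖y‖ := by
    rw [norm_smul, norm_inv, norm_norm, inv_mul_eq_div]
  calc ‖NormedSpace.normalize x - NormedSpace.normalize y‖
      ≤ ‖(‖x‖⁻¹ - ‖y‖⁻¹) • x‖ + ‖‖y‖⁻¹ • (x - y)‖ := hsplit ▸ norm_add_le _ _
    _ ≤ ‖x - y‖ / ‖y‖ + ‖x - y‖ / ‖y‖ := by rw [hsecond]; gcongr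
    _ = 2 * ‖x - y‖ / ‖y‖ := by ring

variable {v : ℝ → ℝ} {R : ℝ} {e x : E}

lemma exists_norm_add_smul_eq (hv0 : v 0 = 0) (hv : ContinuousOn v (Icc 0 R))
    (hx : x ∈ ball (-(v R • e)) R \ {0}) : ∃ r ∈ Ioo 0 R, ‖x + v r • e‖ = r := by
  obtain ⟨hxR, hx0⟩ := hx
  rw [mem_ball_iff_norm, sub_neg_eq_add] at hxR
  have hx0 : 0 < ‖x‖ := norm_pos_iff.2 hx0
  have hgap : ContinuousOn (fun r => ‖x + v r • e‖ - r) (Icc 0 R) := by fun_prop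
  obtain ⟨r, hr, hgap0⟩ := intermediate_value_Ioo' (by linarith [norm_nonneg (x + v R • e)]) hgap
    (show (0 : ℝ) ∈ Ioo (‖x + v R • e‖ - R) (‖x + v 0 • e‖ - 0) by
      simp only [hv0, zero_smul, add_zero, sub_zero]; constructor <;> linarith)
  exact ⟨r, hr, sub_eq_zero.1 hgap0⟩

lemma abs_sub_le_two_mul_abs_sub_gap {s : Set ℝ} (hv : LipschitzOnWith (1 / 2) v s)
    (he : ‖e‖ = 1) (x : E) {a b : ℝ} (ha : a ∈ s) (hb : b ∈ s) :
    |a - b| ≤ 2 * |(‖x + v a • e‖ - a) - (‖x + v b • e‖ - b)| := by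
  have hnorm : |‖x + v a • e‖ - ‖x + v b • e‖| ≤ |a - b| / 2 :=
    calc |‖x + v a • e‖ - ‖x + v b • e‖| ≤ ‖(x + v a • e) - (x + v b • e)‖ :=
          abs_norm_sub_norm_le _ _
      _ = dist (v a) (v b) := by
          rw [add_sub_add_left_eq_sub, ← sub_smul, norm_smul, he, mul_one, Real.dist_eq,
            Real.norm_eq_abs]
      _ ≤ 1 / 2 * dist a b := by exact_mod_cast hv.dist_le_mul a ha b hb
      _ = |a - b| / 2 := by rw [Real.dist_eq]; ring
  have := abs_sub_abs_le_abs_sub (a - b) (‖x + v a • e‖ - ‖x + v b • e‖)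
  rw [abs_sub_comm (a - b)] at this
  rw [show (‖x + v a • e‖ - a) - (‖x + v b • e‖ - b)
    = (‖x + v a • e‖ - ‖x + v b • e‖) - (a - b) by ring]
  linarith

open Classical in
/-- The radius `r` of the sphere `∂B_r(-v(r) e)` through `x` (the paper's `φ`); junk value `0`
when there is none. -/
def leafRadius (v : ℝ → ℝ) (R : ℝ) (e x : E) : ℝ :=
  if h : ∃ r ∈ Ioo 0 R, ‖x + v r • e‖ = r then h.choose else 0

lemma leafRadius_spec (hv0 : v 0 = 0) (hv : ContinuousOn v (Icc 0 R))
    (hx : x ∈ ball (-(v R • e)) R \ {0}) :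
    leafRadius v R e x ∈ Ioo 0 R ∧ ‖x + v (leafRadius v R e x) • e‖ = leafRadius v R e x := by
  have h := exists_norm_add_smul_eq hv0 hv hx
  rw [leafRadius, dif_pos h]
  exact h.choose_spec

lemma leafRadius_eq_iff (hv0 : v 0 = 0) (hv : LipschitzOnWith (1 / 2) v (Icc 0 R))
    (he : ‖e‖ = 1) (hx : x ∈ ball (-(v R • e)) R \ {0}) {r : ℝ} (hr : r ∈ Ioo 0 R) :
    leafRadius v R e x = r ↔ ‖x + v r • e‖ = r := by
  obtain ⟨hφ, hφx⟩ := leafRadius_spec hv0 hv.continuousOn hx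
  refine ⟨fun h => h ▸ hφx, fun hrx => ?_⟩
  have := abs_sub_le_two_mul_abs_sub_gap hv he x (Ioo_subset_Icc_self hφ)
    (Ioo_subset_Icc_self hr)
  rw [hφx, hrx, sub_self, sub_self, sub_self, abs_zero, mul_zero] at this
  exact sub_eq_zero.1 (abs_nonpos_iff.1 this)

lemma lipschitzOnWith_leafRadius (hv0 : v 0 = 0) (hv : LipschitzOnWith (1 / 2) v (Icc 0 R))
    (he : ‖e‖ = 1) : LipschitzOnWith 2 (leafRadius v R e) (ball (-(v R • e)) R \ {0}) := by
  refine LipschitzOnWith.of_dist_le_mul fun x hx y hy => ?_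
  obtain ⟨hr, hrx⟩ := leafRadius_spec hv0 hv.continuousOn hx
  obtain ⟨hs, hsy⟩ := leafRadius_spec hv0 hv.continuousOn hy
  set r := leafRadius v R e x
  set s := leafRadius v R e y
  have hgap : |(‖y + v r • e‖ - r) - (‖y + v s • e‖ - s)| ≤ ‖x - y‖ := by
    rw [hsy, sub_self, sub_zero]
    calc |‖y + v r • e‖ - r| = |‖y + v r • e‖ - ‖x + v r • e‖| := by rw [hrx]
      _ ≤ ‖(y + v r • e) - (x + v r • e)‖ := abs_norm_sub_norm_le _ _
      _ = ‖x - y‖ := by rw [add_sub_add_right_eq_sub, norm_sub_rev]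
  rw [Real.dist_eq, dist_eq_norm, NNReal.coe_ofNat]
  exact (abs_sub_le_two_mul_abs_sub_gap hv he y (Ioo_subset_Icc_self hr)
    (Ioo_subset_Icc_self hs)).trans (by gcongr)

end

section

variable {E : Type*} [NormedAddCommGroup E] [InnerProductSpace ℝ E]

lemma half_le_sub_mul_inner {w e : E} {r a : ℝ} (hw : ‖w‖ = r) (he : ‖e‖ = 1)
    (ha : |a| ≤ 1 / 2) : r / 2 ≤ r - a * ⟪w, e⟫ := by
  have hwe : |⟪w, e⟫| ≤ r := by simpa [hw, he] using abs_real_inner_le_norm w e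
  have : |a * ⟪w, e⟫| ≤ 1 / 2 * r := by
    rw [abs_mul]; exact mul_le_mul ha hwe (abs_nonneg _) (by norm_num)
  linarith [le_abs_self (a * ⟪w, e⟫)]

lemma norm_inv_smul_sub_normalize_le {x e : E} {r a c : ℝ} (he : ‖e‖ = 1) (hr : 0 < r)
    (hw : ‖x + c • e‖ = r) (ha : |a| ≤ 1 / 2) :
    ‖(r - a * ⟪x + c • e, e⟫)⁻¹ • (x + c • e) - NormedSpace.normalize x‖ ≤
      2 * |a| + 2 * |c| / r := by
  set w := x + c • e
  set D := r - a * ⟪w, e⟫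
  have hD : r / 2 ≤ D := half_le_sub_mul_inner hw he ha
  have hD₀ : 0 < D := by linarith
  have hrescale : ‖D⁻¹ • w - r⁻¹ • w‖ ≤ 2 * |a| := by
    have hwe : |⟪w, e⟫| ≤ r := by simpa [hw, he] using abs_real_inner_le_norm w e
    rw [← sub_smul, norm_smul, hw, Real.norm_eq_abs, inv_sub_inv hD₀.ne' hr.ne', abs_div,
      abs_of_pos (mul_pos hD₀ hr), div_mul_eq_mul_div, mul_div_mul_right _ _ hr.ne',
      show r - D = a * ⟪w, e⟫ by ring, abs_mul, div_le_iff₀ hD₀]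
    calc |a| * |⟪w, e⟫| ≤ |a| * r := by gcongr
      _ ≤ 2 * |a| * D := by nlinarith [abs_nonneg a]
  have hw₀ : w ≠ 0 := norm_pos_iff.1 (hw ▸ hr)
  have hnw : NormedSpace.normalize w = r⁻¹ • w := by rw [NormedSpace.normalize, hw]
  calc ‖D⁻¹ • w - NormedSpace.normalize x‖
      ≤ ‖D⁻¹ • w - r⁻¹ • w‖ + ‖NormedSpace.normalize w - NormedSpace.normalize x‖ := by
        rw [← hnw]
        exact norm_sub_le_norm_sub_add_norm_sub _ _ _
    _ ≤ 2 * |a| + 2 * ‖w - x‖ / ‖w‖ := by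
        gcongr
        rw [norm_sub_rev, norm_sub_rev w x]
        exact norm_normalize_sub_normalize_le hw₀
    _ = 2 * |a| + 2 * |c| / r := by
        rw [hw, show w - x = c • e by simp [w], norm_smul, he, mul_one, Real.norm_eq_abs]

open ContinuousLinearMap in
lemma hasFDerivAt_norm_add_smul_sq_sub_sq {v : ℝ → ℝ} {a r : ℝ} (hv : HasDerivAt v a r)
    (e x : E) :
    HasFDerivAt (fun p : E × ℝ => ‖p.1 + v p.2 • e‖ ^ 2 - p.2 ^ 2)
      ((2 : ℝ) • ((innerSL ℝ (x + v r • e)).comp (fst ℝ E ℝ) +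
        (a * ⟪x + v r • e, e⟫ - r) • snd ℝ E ℝ)) (x, r) := by
  have hw := (hasFDerivAt_fst (𝕜 := ℝ) (p := (x, r))).add
    ((hv.comp_hasFDerivAt (x, r) (hasFDerivAt_snd (𝕜 := ℝ) (p := (x, r)))).smul_const e)
  refine (hw.norm_sq.sub (hasFDerivAt_snd.pow 2)).congr_fderiv ?_
  refine ContinuousLinearMap.ext fun ⟨q, t⟩ => ?_
  simp only [comp_apply, add_apply, sub_apply, smul_apply, coe_fst', coe_snd', smulRight_apply,
    innerSL_apply_apply, Pi.add_apply, Function.comp_apply, inner_add_left, inner_add_right,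
    real_inner_smul_left, real_inner_smul_right, real_inner_self_eq_norm_sq, smul_eq_mul,
    nsmul_eq_mul]
  ring

variable [CompleteSpace E] {v v' : ℝ → ℝ} {R : ℝ} {e x : E}

lemma contDiffAt_leafRadius (hv0 : v 0 = 0) (hv : LipschitzOnWith (1 / 2) v (Icc 0 R))
    (hv' : ∀ t ∈ Ioo 0 R, HasDerivAt v (v' t) t) (hv'c : ContinuousOn v' (Ioo 0 R))
    (he : ‖e‖ = 1) (hx : x ∈ ball (-(v R • e)) R \ {0}) :
    ContDiffAt ℝ 1 (leafRadius v R e) x := by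
  have hU : IsOpen (ball (-(v R • e)) R \ {0}) := isOpen_ball.sdiff isClosed_singleton
  have hleaf : ∀ y ∈ ball (-(v R • e)) R \ {0},
      ‖y + v (leafRadius v R e y) • e‖ ^ 2 - leafRadius v R e y ^ 2 = 0 := fun y hy => by
    rw [(leafRadius_spec hv0 hv.continuousOn hy).2, sub_self]
  obtain ⟨hr, hrx⟩ := leafRadius_spec hv0 hv.continuousOn hx
  set r := leafRadius v R e x
  have hvC1 : ContDiffAt ℝ 1 v r :=
    (contDiffOn_one_of_hasDerivAt isOpen_Ioo hv' hv'c).contDiffAt (isOpen_Ioo.mem_nhds hr)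
  have hw : ContDiffAt ℝ 1 (fun p : E × ℝ => p.1 + v p.2 • e) (x, r) :=
    (contDiffAt_fst (𝕜 := ℝ)).add ((hvC1.comp (x, r) contDiffAt_snd).smul contDiffAt_const)
  have hf : ContDiffAt ℝ 1 (fun p : E × ℝ => ‖p.1 + v p.2 • e‖ ^ 2 - p.2 ^ 2) (x, r) :=
    (hw.norm_sq ℝ).sub (contDiffAt_snd.pow 2)
  have hD := half_le_sub_mul_inner hrx he
    ((hv' r hr).abs_le_of_lipschitzOnWith (Icc_mem_nhds hr.1 hr.2) hv)
  refine hf.contDiffAt_of_eventually_apply_eq one_ne_zero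
    (ContinuousLinearMap.isInvertible_of_apply_one_ne_zero ?_)
    ((lipschitzOnWith_leafRadius hv0 hv he).continuousOn.continuousAt (hU.mem_nhds hx)) ?_
  · rw [(hasFDerivAt_norm_add_smul_sq_sub_sq (hv' r hr) e x).fderiv]
    simp only [ContinuousLinearMap.comp_apply, ContinuousLinearMap.inr_apply, smul_apply,
      add_apply, ContinuousLinearMap.coe_fst', ContinuousLinearMap.coe_snd', innerSL_apply_apply,
      inner_zero_right, smul_eq_mul]
    nlinarith [hr.1]
  · filter_upwards [hU.mem_nhds hx] with y hy
    rw [hleaf y hy, hleaf x hx]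

lemma hasGradientAt_leafRadius (hv0 : v 0 = 0) (hv : LipschitzOnWith (1 / 2) v (Icc 0 R))
    (hv' : ∀ t ∈ Ioo 0 R, HasDerivAt v (v' t) t) (hv'c : ContinuousOn v' (Ioo 0 R))
    (he : ‖e‖ = 1) (hx : x ∈ ball (-(v R • e)) R \ {0}) :
    HasGradientAt (leafRadius v R e)
      ((leafRadius v R e x - v' (leafRadius v R e x) *
          ⟪x + v (leafRadius v R e x) • e, e⟫)⁻¹ • (x + v (leafRadius v R e x) • e)) x := by
  have hU : IsOpen (ball (-(v R • e)) R \ {0}) := isOpen_ball.sdiff isClosed_singleton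
  obtain ⟨hr, hrx⟩ := leafRadius_spec hv0 hv.continuousOn hx
  set r := leafRadius v R e x
  set w := x + v r • e
  have hD : r / 2 ≤ r - v' r * ⟪w, e⟫ := half_le_sub_mul_inner hrx he
    ((hv' r hr).abs_le_of_lipschitzOnWith (Icc_mem_nhds hr.1 hr.2) hv)
  have hφ : HasFDerivAt (leafRadius v R e) (fderiv ℝ (leafRadius v R e) x) x :=
    ((contDiffAt_leafRadius hv0 hv hv' hv'c he hx).differentiableAt one_ne_zero).hasFDerivAt
  -- Differentiating `‖y + v (φ y) • e‖ ^ 2 - φ y ^ 2 = 0` at `x` determines `fderiv φ x`.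
  have hcomp := (hasFDerivAt_norm_add_smul_sq_sub_sq (hv' r hr) e x).comp x
    ((hasFDerivAt_id (𝕜 := ℝ) x).prodMk hφ)
  have hzero : HasFDerivAt (fun y => ‖y + v (leafRadius v R e y) • e‖ ^ 2 -
      leafRadius v R e y ^ 2) (0 : E →L[ℝ] ℝ) x := by
    refine (hasFDerivAt_const 0 x).congr_of_eventuallyEq ?_
    filter_upwards [hU.mem_nhds hx] with y hy
    rw [(leafRadius_spec hv0 hv.continuousOn hy).2, sub_self]
  rw [hasGradientAt_iff_hasFDerivAt]
  refine hφ.congr_fderiv (ContinuousLinearMap.ext fun q => ?_)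
  have hq := congrArg (fun L : E →L[ℝ] ℝ => L q) (hcomp.unique hzero)
  simp only [ContinuousLinearMap.comp_apply, ContinuousLinearMap.prod_apply,
    ContinuousLinearMap.id_apply, smul_apply, add_apply, ContinuousLinearMap.coe_fst',
    ContinuousLinearMap.coe_snd', innerSL_apply_apply, smul_eq_mul, zero_apply] at hq
  rw [InnerProductSpace.toDual_apply_apply, real_inner_smul_left, inv_mul_eq_div,
    eq_div_iff (by linarith [hr.1])]
  linarith

lemma normalize_gradient_leafRadius (hv0 : v 0 = 0) (hv : LipschitzOnWith (1 / 2) v (Icc 0 R))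
    (hv' : ∀ t ∈ Ioo 0 R, HasDerivAt v (v' t) t) (hv'c : ContinuousOn v' (Ioo 0 R))
    (he : ‖e‖ = 1) (hx : x ∈ ball (-(v R • e)) R \ {0}) :
    NormedSpace.normalize (gradient (leafRadius v R e) x) =
      NormedSpace.normalize (x + v (leafRadius v R e x) • e) := by
  obtain ⟨hr, hrx⟩ := leafRadius_spec hv0 hv.continuousOn hx
  have hD := half_le_sub_mul_inner hrx he
    ((hv' _ hr).abs_le_of_lipschitzOnWith (Icc_mem_nhds hr.1 hr.2) hv)
  rw [(hasGradientAt_leafRadius hv0 hv hv' hv'c he hx).gradient]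
  exact NormedSpace.normalize_smul_of_pos (inv_pos.2 (by linarith [hr.1])) _

lemma norm_gradient_leafRadius_sub_normalize_le (hv0 : v 0 = 0)
    (hmono : MonotoneOn v (Icc 0 R)) (hv : LipschitzOnWith (1 / 2) v (Icc 0 R))
    (hv' : ∀ t ∈ Ioo 0 R, HasDerivAt v (v' t) t) (hv'c : ContinuousOn v' (Ioo 0 R))
    (hv'₀ : ∀ t ∈ Ioo 0 R, 0 ≤ v' t) (he : ‖e‖ = 1) (hx : x ∈ ball (-(v R • e)) R \ {0}) :
    ‖gradient (leafRadius v R e) x - NormedSpace.normalize x‖ ≤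
      4 * √(v (leafRadius v R e x) / leafRadius v R e x + v' (leafRadius v R e x)) := by
  obtain ⟨hr, hrx⟩ := leafRadius_spec hv0 hv.continuousOn hx
  set r := leafRadius v R e x
  have h0 : (0 : ℝ) ∈ Icc 0 R := left_mem_Icc.2 (hr.1.trans hr.2).le
  have hvr : 0 ≤ v r := hv0 ▸ hmono h0 (Ioo_subset_Icc_self hr) hr.1.le
  have hvr2 : v r ≤ r / 2 := by
    have := hv.dist_le_mul r (Ioo_subset_Icc_self hr) 0 h0
    rw [hv0, Real.dist_eq, Real.dist_eq, sub_zero, sub_zero, abs_of_nonneg hvr,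
      abs_of_pos hr.1] at this
    push_cast at this
    linarith
  have hv'r : |v' r| ≤ 1 / 2 := (hv' r hr).abs_le_of_lipschitzOnWith (Icc_mem_nhds hr.1 hr.2) hv
  set s := v r / r + v' r
  have hs : 0 ≤ s := add_nonneg (div_nonneg hvr hr.1.le) (hv'₀ r hr)
  have hs1 : s ≤ 1 := by
    have : v r / r ≤ 1 / 2 := by rw [div_le_iff₀ hr.1]; linarith
    linarith [abs_le.1 hv'r]
  rw [(hasGradientAt_leafRadius hv0 hv hv' hv'c he hx).gradient]
  calc _ ≤ 2 * |v' r| + 2 * |v r| / r := norm_inv_smul_sub_normalize_le he hr.1 hrx hv'r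
    _ = 2 * s := by rw [abs_of_nonneg (hv'₀ r hr), abs_of_nonneg hvr]; ring
    _ ≤ 4 * √s := by nlinarith [Real.sq_sqrt hs, Real.sqrt_nonneg s, Real.sqrt_le_one.mpr hs1]

end

theorem foliation_exists_general {n : ℕ}
    (R : ℝ) (v v' : ℝ → ℝ)
    (hv0 : v 0 = 0)
    (hvcont : ContinuousOn v (Icc 0 R)) (hv'cont : ContinuousOn v' (Ico 0 R))
    (hderiv : ∀ t ∈ Ioo (0:ℝ) R, HasDerivAt v (v' t) t)
    (hv'bd : ∀ t ∈ Ico (0:ℝ) R, 0 ≤ v' t ∧ v' t ≤ 1/2) :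
    ∃ φ : Eucl (n+1) → ℝ,
      ContDiffOn ℝ 1 φ (ball (vertexPt v R : Eucl (n+1)) R \ {0}) ∧
      (∀ x ∈ ball (vertexPt v R : Eucl (n+1)) R \ {0}, 0 ≤ φ x ∧ φ x < R) ∧
      (∀ r ∈ Ioo (0:ℝ) R, ∀ x ∈ ball (vertexPt v R : Eucl (n+1)) R \ {0},
        (φ x = r ↔ x ∈ Metric.sphere (vertexPt v r : Eucl (n+1)) r)) ∧
      ∀ x ∈ ball (vertexPt v R : Eucl (n+1)) R \ {0},
        ‖gradient φ x‖⁻¹ • gradient φ x =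
            ‖x - vertexPt v (φ x)‖⁻¹ • (x - vertexPt v (φ x)) ∧
        ‖gradient φ x - ‖x‖⁻¹ • x‖ ≤
            4 * Real.sqrt (v (φ x) / φ x + v' (φ x)) := by
  have hv'₀ : ∀ t ∈ Ioo 0 R, 0 ≤ v' t := fun t ht => (hv'bd t (Ioo_subset_Ico_self ht)).1
  have hv'le : ∀ t ∈ Ioo 0 R, v' t ≤ (1 / 2 : ℝ≥0) := fun t ht => by
    exact_mod_cast (hv'bd t (Ioo_subset_Ico_self ht)).2
  have hmono := monotoneOn_Icc_of_hasDerivAt_nonneg hvcont hderiv hv'₀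
  have hlip := lipschitzOnWith_Icc_of_hasDerivAt hvcont hderiv hv'₀ hv'le
  have hv'c := hv'cont.mono Ioo_subset_Ico_self
  simp only [vertexPt_eq_neg_smul_single, mem_sphere_iff_norm, sub_neg_eq_add]
  set e : Eucl (n + 1) := EuclideanSpace.single (Fin.last n) 1
  have he : ‖e‖ = 1 := by simp [e]
  refine ⟨leafRadius v R e, fun x hx =>
      (contDiffAt_leafRadius hv0 hlip hderiv hv'c he hx).contDiffWithinAt,
    fun x hx => ?_, fun r hr x hx => leafRadius_eq_iff hv0 hlip he hx hr, fun x hx => ?_⟩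
  · obtain ⟨hr, -⟩ := leafRadius_spec hv0 hvcont hx
    exact ⟨hr.1.le, hr.2⟩
  exact ⟨normalize_gradient_leafRadius hv0 hlip hderiv hv'c he hx,
    norm_gradient_leafRadius_sub_normalize_le hv0 hmono hlip hderiv hv'c hv'₀ he hx⟩

/-- foliation by off-centric spheres. Let `v ∈ C¹` with
`v(0) = v'(0) = 0` and `0 ≤ v' ≤ 1/2` on `[0,R)`, and `V_r = −v(r)e_{n+1}`. Then there
is `φ ∈ C¹(B_R(V_R) ∖ {0})` with `0 ≤ φ < R`, whose level set `φ⁻¹(r)` is the sphere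
`∂B_r(V_r)` for `0 < r < R`; moreover `∇φ(x)/|∇φ(x)| = (x−V_{φ(x)})/|x−V_{φ(x)}|` and
`|∇φ(x) − x/|x|| ≤ 4√(v(φ(x))/φ(x) + v'(φ(x)))` on `B_R(V_R) ∖ {0}`. -/
theorem foliation_exists {n : ℕ}
    (R : ℝ) (hR : 0 < R) (v v' : ℝ → ℝ)
    (hv0 : v 0 = 0) (hv'0 : v' 0 = 0)
    (hvcont : ContinuousOn v (Icc 0 R)) (hv'cont : ContinuousOn v' (Ico 0 R))
    (hderiv : ∀ t ∈ Ioo (0:ℝ) R, HasDerivAt v (v' t) t)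
    (hv'bd : ∀ t ∈ Ico (0:ℝ) R, 0 ≤ v' t ∧ v' t ≤ 1/2) :
    ∃ φ : Eucl (n+1) → ℝ,
      ContDiffOn ℝ 1 φ (ball (vertexPt v R : Eucl (n+1)) R \ {0}) ∧
      (∀ x ∈ ball (vertexPt v R : Eucl (n+1)) R \ {0}, 0 ≤ φ x ∧ φ x < R) ∧
      (∀ r ∈ Ioo (0:ℝ) R, ∀ x ∈ ball (vertexPt v R : Eucl (n+1)) R \ {0},
        (φ x = r ↔ x ∈ Metric.sphere (vertexPt v r : Eucl (n+1)) r)) ∧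
      ∀ x ∈ ball (vertexPt v R : Eucl (n+1)) R \ {0},
        ‖gradient φ x‖⁻¹ • gradient φ x =
            ‖x - vertexPt v (φ x)‖⁻¹ • (x - vertexPt v (φ x)) ∧
        ‖gradient φ x - ‖x‖⁻¹ • x‖ ≤
            4 * Real.sqrt (v (φ x) / φ x + v' (φ x)) :=
  foliation_exists_general R v v' hv0 hvcont hv'cont hderiv hv'bd
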